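/- Any n-dimensional Lagrangian submanifold M of a complex space form M̃(4c) satisfies the pointwise Ricci bound: the maximal Ricci curvature obeys Ric_max ≤ (n−1)c + (n²/4)‖H‖², where H is the mean curvature vector. -/

import Mathlib

open Finset
open scoped RealInnerProductSpace

/-! The Ricci expression is `⟪a, S⟫ - Σᵢ ‖h e₀ i‖²` with `a = h e₀ e₀` and `S = Σᵢ h i i = n H`.
Dropping every term of the sum but `‖a‖²` leaves `⟪a, S⟫ - ‖a‖²`, which is at most `‖S‖² / 4`
because `‖S - 2a‖² ≥ 0`. -/

section

variable {E : Type*} [NormedAddCommGroup E] [InnerProductSpace ℝ E]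

theorem real_inner_sub_norm_sq_le_norm_sq_div_four (a s : E) :
    ⟪a, s⟫ - ‖a‖ ^ 2 ≤ ‖s‖ ^ 2 / 4 := by
  have h := norm_sub_sq_real s ((2 : ℝ) • a)
  rw [norm_smul, inner_smul_right, real_inner_comm] at h
  norm_num at h
  nlinarith [sq_nonneg ‖s - (2 : ℝ) • a‖]

theorem sq_mul_norm_inv_smul_sq {r : ℝ} (hr : r ≠ 0) (x : E) :
    r ^ 2 * ‖r⁻¹ • x‖ ^ 2 = ‖x‖ ^ 2 := by
  rw [norm_smul, mul_pow, norm_inv, Real.norm_eq_abs, inv_pow, sq_abs, mul_inv_cancel_left₀]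
  exact pow_ne_zero 2 hr

theorem sum_inner_diag_sub_norm_sq_le {ι : Type*} [Fintype ι] (h : ι → ι → E) (e0 : ι) :
    ∑ i, (⟪h e0 e0, h i i⟫ - ‖h e0 i‖ ^ 2) ≤ ‖∑ i, h i i‖ ^ 2 / 4 := by
  have hdiag : ‖h e0 e0‖ ^ 2 ≤ ∑ i, ‖h e0 i‖ ^ 2 :=
    single_le_sum (f := fun i => ‖h e0 i‖ ^ 2) (fun i _ => by positivity) (mem_univ e0)
  calc ∑ i, (⟪h e0 e0, h i i⟫ - ‖h e0 i‖ ^ 2)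
      = ⟪h e0 e0, ∑ i, h i i⟫ - ∑ i, ‖h e0 i‖ ^ 2 := by rw [sum_sub_distrib, inner_sum]
    _ ≤ ⟪h e0 e0, ∑ i, h i i⟫ - ‖h e0 e0‖ ^ 2 := by gcongr
    _ ≤ ‖∑ i, h i i‖ ^ 2 / 4 := real_inner_sub_norm_sq_le_norm_sq_div_four _ _

end

theorem chen_ricci_inequality_lagrangian_general
    {E : Type*} [NormedAddCommGroup E] [InnerProductSpace ℝ E]
    (n : ℕ) (c : ℝ) (h : Fin n → Fin n → E)
    (e0 : Fin n) :
    ((n : ℝ) - 1) * c +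
        ∑ i : Fin n, ((inner ℝ (h e0 e0) (h i i) : ℝ) - ‖h e0 i‖ ^ 2)
      ≤ ((n : ℝ) - 1) * c +
        ((n : ℝ) ^ 2 / 4) * ‖(n : ℝ)⁻¹ • ∑ i : Fin n, h i i‖ ^ 2 := by
  have hn : (n : ℝ) ≠ 0 := Nat.cast_ne_zero.mpr (Fin.pos e0).ne'
  rw [div_mul_eq_mul_div, sq_mul_norm_inv_smul_sq hn]
  gcongr
  exact sum_inner_diag_sub_norm_sq_le h e0

/-- Chen's Ricci inequality for Lagrangian submanifolds of a complex space form
`M̃(4c)`, in its Gauss-equation algebraic form: if `h : Fin n → Fin n → E` is the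
(symmetric, normal-bundle valued) second fundamental form and
`H = (1/n) Σᵢ h i i` the mean curvature vector, then the Ricci curvature of a
unit vector `e₀`,
`Ric(e₀,e₀) = (n-1)c + Σᵢ (⟨h e0 e0, h i i⟩ - ‖h e0 i‖²)`,
is at most `(n-1)c + (n²/4)‖H‖²`. -/
theorem chen_ricci_inequality_lagrangian
    {E : Type*} [NormedAddCommGroup E] [InnerProductSpace ℝ E]
    (n : ℕ) (hn : 2 ≤ n) (c : ℝ) (h : Fin n → Fin n → E)
    (hsymm : ∀ i j, h i j = h j i)
    (e0 : Fin n) :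
    ((n : ℝ) - 1) * c +
        ∑ i : Fin n, ((inner ℝ (h e0 e0) (h i i) : ℝ) - ‖h e0 i‖ ^ 2)
      ≤ ((n : ℝ) - 1) * c +
        ((n : ℝ) ^ 2 / 4) * ‖(n : ℝ)⁻¹ • ∑ i : Fin n, h i i‖ ^ 2 :=
  chen_ricci_inequality_lagrangian_general n c h e0
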